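/- arXiv:1701.06806 — 2 statements merged into one kernel-verified Lean document; each statement's English description precedes it below -/
import Mathlib

section
/- Let C ⊆ {0,1}^N be a finite concept class with |C| ≥ 2 and let γ(C) > 0 be its combinatorial parameter. Then any sequence of membership-query answers consistent with a fixed target, where each query is chosen to maximize the eliminated fraction, shrinks the candidate set by a factor at least (1 − γ(C)) per query; consequently, after T ≥ log(|C|)/log(1/(1−γ(C))) such queries at most one concept remains. In particular O(log|C|/γ(C)) queries suffice. -/
open Finset

/-- `γ'(C',i,b)`: the fraction of concepts `c ∈ C'` with `c i = b`. -/
noncomputable def gammaFrac {N : ℕ} (C' : Finset (Fin N → Bool)) (i : Fin N) (b : Bool) : ℝ :=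
  ((C'.filter fun c => c i = b).card : ℝ) / C'.card

/-- `γ'(C',i) = min_b γ'(C',i,b)`. -/
noncomputable def gammaIdx {N : ℕ} (C' : Finset (Fin N → Bool)) (i : Fin N) : ℝ :=
  min (gammaFrac C' i false) (gammaFrac C' i true)

/-- `γ'(C') = max_i γ'(C',i)`. -/
noncomputable def gammaSet {N : ℕ} (C' : Finset (Fin N → Bool)) : ℝ :=
  ⨆ i : Fin N, gammaIdx C' i

/-- `γ(C) = min over C' ⊆ C with |C'| ≥ 2 of γ'(C')`. -/
noncomputable def gammaC {N : ℕ} (C : Finset (Fin N → Bool)) : ℝ :=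
  sInf {x : ℝ | ∃ C' : Finset (Fin N → Bool), C' ⊆ C ∧ 2 ≤ C'.card ∧ x = gammaSet C'}

/-!
A query at the index `i` maximising `γ'(C', i)` leaves, whatever the answer `b`, the fraction
`γ'(C', i, b) = 1 - γ'(C', i, !b) ≤ 1 - γ'(C') ≤ 1 - γ(C)` of the current candidates. As
`γ'(C, i) ≤ 1/2` for every `i`, the shrinking factor `q = 1 - γ(C)` lies in `(0, 1)`,
so as long as at least two candidates remain their number is at most `q ^ k * |C|` after `k`
queries, and `q ^ T * |C| ≤ 1` once `T ≥ log |C| / log (1 / q)`.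
-/

section Gamma

variable {N : ℕ}

lemma gammaFrac_nonneg (C' : Finset (Fin N → Bool)) (i : Fin N) (b : Bool) :
    0 ≤ gammaFrac C' i b := by
  unfold gammaFrac; positivity

lemma gammaFrac_not_add_self {C' : Finset (Fin N → Bool)} (hC' : C'.Nonempty) (i : Fin N)
    (b : Bool) : gammaFrac C' i (!b) + gammaFrac C' i b = 1 := by
  have hsplit : (C'.filter fun c => c i = !b).card + (C'.filter fun c => c i = b).card
      = C'.card := by
    simpa [Bool.eq_not] using card_filter_add_card_filter_not (s := C') (fun c => c i = !b)
  rw [gammaFrac, gammaFrac, ← add_div, div_eq_one_iff_eq (by simpa using hC'.card_pos.ne'),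
    ← Nat.cast_add, hsplit]

lemma gammaIdx_le_half {C' : Finset (Fin N → Bool)} (hC' : C'.Nonempty) (i : Fin N) :
    gammaIdx C' i ≤ 1 / 2 := by
  have := gammaFrac_not_add_self hC' i true
  simp only [Bool.not_true] at this
  rw [gammaIdx, min_le_iff]
  by_contra! h
  linarith

lemma gammaSet_nonneg (C' : Finset (Fin N → Bool)) : 0 ≤ gammaSet C' :=
  Real.iSup_nonneg fun i => le_min (gammaFrac_nonneg C' i false) (gammaFrac_nonneg C' i true)

lemma gammaSet_le_half {C' : Finset (Fin N → Bool)} (hC' : C'.Nonempty) :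
    gammaSet C' ≤ 1 / 2 :=
  Real.iSup_le (gammaIdx_le_half hC') (by norm_num)

lemma gammaC_le_gammaSet {C C' : Finset (Fin N → Bool)} (hsub : C' ⊆ C) (hcard : 2 ≤ C'.card) :
    gammaC C ≤ gammaSet C' :=
  csInf_le ⟨0, fun _ ⟨D, _, _, hx⟩ => hx ▸ gammaSet_nonneg D⟩ ⟨C', hsub, hcard, rfl⟩

lemma gammaC_le_half {C : Finset (Fin N → Bool)} (hC : 2 ≤ C.card) : gammaC C ≤ 1 / 2 :=
  (gammaC_le_gammaSet subset_rfl hC).trans (gammaSet_le_half (card_pos.mp (by omega)))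

lemma card_filter_le_of_le_gammaIdx {C' : Finset (Fin N → Bool)} {i : Fin N} {g : ℝ}
    (hg : g ≤ gammaIdx C' i) (b : Bool) :
    ((C'.filter fun c => c i = b).card : ℝ) ≤ (1 - g) * C'.card := by
  rcases C'.eq_empty_or_nonempty with rfl | hC'
  · simp
  have hpos : (0 : ℝ) < C'.card := by exact_mod_cast hC'.card_pos
  have hnot : g ≤ gammaFrac C' i (!b) := by
    cases b
    exacts [hg.trans (min_le_right _ _), hg.trans (min_le_left _ _)]
  have hfrac : gammaFrac C' i b ≤ 1 - g := by
    linarith [gammaFrac_not_add_self hC' i b]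
  rwa [gammaFrac, div_le_iff₀ hpos] at hfrac

lemma nonempty_fin_of_one_lt_card {C' : Finset (Fin N → Bool)} (hcard : 1 < C'.card) :
    Nonempty (Fin N) := by
  obtain ⟨c, -, d, -, hcd⟩ := one_lt_card.mp hcard
  obtain ⟨i, -⟩ := Function.ne_iff.mp hcd
  exact ⟨i⟩

lemma exists_query_card_filter_le {C' : Finset (Fin N → Bool)} {g : ℝ} (hcard : 2 ≤ C'.card)
    (hg : g ≤ gammaSet C') :
    ∃ i : Fin N, ∀ b : Bool, ((C'.filter fun c => c i = b).card : ℝ) ≤ (1 - g) * C'.card := by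
  have := nonempty_fin_of_one_lt_card hcard
  obtain ⟨i, hi⟩ := exists_eq_ciSup_of_finite (f := gammaIdx C')
  exact ⟨i, card_filter_le_of_le_gammaIdx (hg.trans hi.ge)⟩

end Gamma

section Shrinking

variable {a : ℕ → ℕ} {q : ℝ}

lemma le_one_or_le_pow_mul_of_shrinking (hq : 0 ≤ q) (hmono : ∀ k, a (k + 1) ≤ a k)
    (hshrink : ∀ k, 2 ≤ a k → (a (k + 1) : ℝ) ≤ q * a k) (k : ℕ) :
    a k ≤ 1 ∨ (a k : ℝ) ≤ q ^ k * a 0 := by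
  induction k with
  | zero => simp
  | succ k ih =>
    by_cases hk : a k ≤ 1
    · exact .inl ((hmono k).trans hk)
    refine .inr ?_
    calc (a (k + 1) : ℝ) ≤ q * a k := hshrink k (by omega)
      _ ≤ q * (q ^ k * a 0) := by gcongr; exact ih.resolve_left hk
      _ = q ^ (k + 1) * a 0 := by ring

lemma pow_mul_le_one_of_log_div_le {n : ℝ} (hn : 0 ≤ n) (hq0 : 0 < q) (hq1 : q < 1) {T : ℕ}
    (hT : Real.log n / Real.log (1 / q) ≤ T) : q ^ T * n ≤ 1 := by
  rcases hn.eq_or_lt with rfl | hn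
  · simp
  have hlog : 0 < Real.log (1 / q) :=
    Real.log_pos (by rw [one_div]; exact (one_lt_inv₀ hq0).mpr hq1)
  have hle : n ≤ (1 / q) ^ T := by
    rw [← Real.log_le_log_iff hn (by positivity), Real.log_pow]
    rwa [div_le_iff₀ hlog] at hT
  calc q ^ T * n ≤ q ^ T * (1 / q) ^ T := by gcongr
    _ = 1 := by rw [← mul_pow, mul_one_div_cancel hq0.ne', one_pow]

lemma le_one_of_shrinking (hq0 : 0 < q) (hq1 : q < 1) (hmono : ∀ k, a (k + 1) ≤ a k)
    (hshrink : ∀ k, 2 ≤ a k → (a (k + 1) : ℝ) ≤ q * a k) {T : ℕ}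
    (hT : Real.log (a 0) / Real.log (1 / q) ≤ T) : a T ≤ 1 := by
  refine (le_one_or_le_pow_mul_of_shrinking hq0.le hmono hshrink T).elim id fun h => ?_
  exact_mod_cast h.trans (pow_mul_le_one_of_log_div_le (Nat.cast_nonneg _) hq0 hq1 hT)

end Shrinking

/-- Greedy membership queries shrink the candidate set by a factor `1 - γ(C)` per query,
so after `T ≥ log|C| / log(1/(1-γ(C)))` queries at most one concept remains. -/
theorem greedy_exact_learning {N : ℕ} (C : Finset (Fin N → Bool))
    (hC : 2 ≤ C.card) (hγ : 0 < gammaC C) :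
    -- the greedy query eliminates at least a γ(C)-fraction, whatever the answer:
    (∀ C' : Finset (Fin N → Bool), C' ⊆ C → 2 ≤ C'.card →
      ∃ i : Fin N, ∀ b : Bool,
        ((C'.filter fun c => c i = b).card : ℝ) ≤ (1 - gammaC C) * C'.card) ∧
    -- consequently, any query process shrinking by a factor `1 - γ(C)` per step
    -- leaves at most one candidate after `T ≥ log|C|/log(1/(1-γ(C)))` steps:
    (∀ Cs : ℕ → Finset (Fin N → Bool), Cs 0 = C →
      (∀ k : ℕ, Cs (k + 1) ⊆ Cs k ∧
        (2 ≤ (Cs k).card → ((Cs (k + 1)).card : ℝ) ≤ (1 - gammaC C) * (Cs k).card)) →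
      ∀ T : ℕ, Real.log C.card / Real.log (1 / (1 - gammaC C)) ≤ T → (Cs T).card ≤ 1) := by
  refine ⟨fun C' hsub hcard => exists_query_card_filter_le hcard (gammaC_le_gammaSet hsub hcard),
    fun Cs h0 hstep T hT => ?_⟩
  have hhalf := gammaC_le_half hC
  exact le_one_of_shrinking (a := fun k => (Cs k).card) (by linarith) (by linarith)
    (fun k => card_le_card (hstep k).1) (fun k => (hstep k).2) (by simpa [h0] using hT)
end

section
/- Let C ⊆ {0,1}^N be the class of all N Hamming-weight-1 strings (with N ≥ 2). Then γ(C) = 1/N. -/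
open Finset

private lemma F_inj {N : ℕ} :
    Function.Injective (fun j => fun i : Fin N => decide (i = j)) := by
  intro a b h
  have := congrFun h a
  simpa using this.symm

private lemma filter_true_eq {N : ℕ} (C' : Finset (Fin N → Bool))
    (hsub : C' ⊆ (univ : Finset (Fin N)).image fun j => fun i : Fin N => decide (i = j))
    (i : Fin N) :
    C'.filter (fun c => c i = true) = C'.filter (fun c => c = fun k : Fin N => decide (k = i)) := by
  apply Finset.filter_congr
  intro c hc
  obtain ⟨j, -, hj⟩ := Finset.mem_image.mp (hsub hc)
  subst hj
  simp only [decide_eq_true_eq]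
  constructor
  · rintro rfl; rfl
  · intro h
    have := congrFun h i
    simpa using this.symm

private lemma gammaIdx_eq {N : ℕ} (C' : Finset (Fin N → Bool))
    (hsub : C' ⊆ (univ : Finset (Fin N)).image fun j => fun i : Fin N => decide (i = j))
    (hcard : 2 ≤ C'.card) (i : Fin N) :
    gammaIdx C' i =
      (if (fun k : Fin N => decide (k = i)) ∈ C' then (1:ℝ) else 0) / C'.card := by
  have hk0 : 0 < C'.card := by omega
  have hkpos : (0:ℝ) < C'.card := by exact_mod_cast hk0
  have hsum := Finset.card_filter_add_card_filter_not (s := C') (p := fun c => c i = false)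
  have heq : C'.filter (fun c => ¬ c i = false) = C'.filter (fun c => c i = true) := by
    apply Finset.filter_congr; intro c _; simp
  rw [heq] at hsum
  unfold gammaIdx gammaFrac
  by_cases hm : (fun k : Fin N => decide (k = i)) ∈ C'
  · have ht : (C'.filter (fun c => c i = true)).card = 1 := by
      rw [filter_true_eq C' hsub i, Finset.filter_eq', if_pos hm]; simp
    rw [ht] at hsum ⊢
    have hf : (C'.filter (fun c => c i = false)).card = C'.card - 1 :=
      Nat.eq_sub_of_add_eq hsum
    rw [hf, min_eq_right, if_pos hm]
    · norm_num
    · gcongr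
      have : 1 ≤ C'.card - 1 := Nat.le_sub_of_add_le hcard
      exact_mod_cast this
  · have ht : (C'.filter (fun c => c i = true)).card = 0 := by
      rw [filter_true_eq C' hsub i, Finset.filter_eq', if_neg hm]; simp
    rw [ht] at hsum ⊢
    have hf : (C'.filter (fun c => c i = false)).card = C'.card - 0 :=
      Nat.eq_sub_of_add_eq hsum
    rw [hf, min_eq_right, if_neg hm]
    · norm_num
    · gcongr
      have : 0 ≤ C'.card - 0 := Nat.zero_le _
      exact_mod_cast this

private lemma gammaSet_eq {N : ℕ} (hN : 2 ≤ N) (C' : Finset (Fin N → Bool))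
    (hsub : C' ⊆ (univ : Finset (Fin N)).image fun j => fun i : Fin N => decide (i = j))
    (hcard : 2 ≤ C'.card) :
    gammaSet C' = 1 / (C'.card : ℝ) := by
  have hne : Nonempty (Fin N) := ⟨⟨0, by omega⟩⟩
  have hkpos : (0:ℝ) < C'.card := by exact_mod_cast (by omega : 0 < C'.card)
  obtain ⟨c, hc⟩ := Finset.card_pos.mp (by omega : 0 < C'.card)
  obtain ⟨j, -, hj⟩ := Finset.mem_image.mp (hsub hc)
  apply le_antisymm
  · apply ciSup_le
    intro i
    rw [gammaIdx_eq C' hsub hcard i]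
    split
    · simp
    · simp only [zero_div]
      positivity
  · have := le_ciSup (f := fun i => gammaIdx C' i) (Set.Finite.bddAbove (Set.finite_range _)) j
    refine le_trans ?_ this
    rw [gammaIdx_eq C' hsub hcard j]
    have : (fun k : Fin N => decide (k = j)) ∈ C' := by rw [hj]; exact hc
    rw [if_pos this]

/-- For the class of all Hamming-weight-1 strings of length `N ≥ 2`, `γ(C) = 1/N`. -/
theorem gammaC_weight_one {N : ℕ} (hN : 2 ≤ N) :
    gammaC ((univ : Finset (Fin N)).image fun j => fun i : Fin N => decide (i = j))
      = 1 / (N : ℝ) := by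
  set C := (univ : Finset (Fin N)).image fun j => fun i : Fin N => decide (i = j) with hC
  have hcardC : C.card = N := by
    rw [hC, Finset.card_image_of_injective _ F_inj, Finset.card_univ, Fintype.card_fin]
  have hNpos : (0:ℝ) < N := by exact_mod_cast (by omega : 0 < N)
  unfold gammaC
  apply le_antisymm
  · apply csInf_le
    · refine ⟨0, ?_⟩
      rintro x ⟨C', hsub, hcard, rfl⟩
      rw [gammaSet_eq hN C' hsub hcard]
      positivity
    · exact ⟨C, Finset.Subset.refl _, by omega, by rw [gammaSet_eq hN C (Finset.Subset.refl _) (by omega), hcardC]⟩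
  · apply le_csInf
    · exact ⟨gammaSet C, C, Finset.Subset.refl _, by omega, rfl⟩
    · rintro x ⟨C', hsub, hcard, rfl⟩
      rw [gammaSet_eq hN C' hsub hcard]
      have hle : C'.card ≤ N := le_trans (Finset.card_le_card hsub) (le_of_eq hcardC)
      have : (0:ℝ) < C'.card := by exact_mod_cast (by omega : 0 < C'.card)
      apply one_div_le_one_div_of_le this
      exact_mod_cast hle
end
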